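/- arXiv:2401.07557 — 3 statements merged into one kernel-verified Lean document; each statement's English description precedes it below -/
import Mathlib

section
/- Let F be a finite field, σ : F → F a field automorphism with σ ∘ σ = id, ε ∈ {1, −1}, and β : V × V → F a nondegenerate form on a finite-dimensional F-vector space V that is F-linear in the first variable and satisfies β(v,u) = ε·σ(β(u,v)) for all u, v. Let X ∈ GL(V) satisfy β(Xu, Xv) = β(u,v) for all u, v, and let U be an X-invariant subspace of V with U ∩ U^⊥ = {0}, where U^⊥ = {v ∈ V : β(u,v) = 0 for all u ∈ U}. If f is the minimal polynomial of the restriction of X to U, then f = f*, where f*(t) = σ(f(0))⁻¹ · t^{deg f} · (σf)(1/t) and σf denotes f with σ applied to each coefficient. -/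
/-!
On `U` the form `β` is sesquilinear and, being reflexive with `U ∩ U^⊥ = 0`, separating on the
left; `Y = X|_U` is an isometry of it. For a polynomial `p` of degree at most `n`, moving powers
of `Y` across the form turns `β(Y^n w, p(Y) v)` into `β((t^n (σp)(1/t))(Y) w, v)`. With `p = f`
the left side vanishes, so by separation the reversal of `σf` annihilates `Y` and `f ∣ f*`.
An isometry of a left-separating form is injective, so `f(0) ≠ 0`; then `f*` is monic of the
same degree as `f`, and the two coincide.
-/

open Polynomial

/-- The `σ`-dual polynomial `f*(t) = σ(f(0))⁻¹ · t^(deg f) · (σf)(1/t)`, where `σf` applies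
`σ` to each coefficient of `f`. -/
noncomputable def dualPolySigma {F : Type} [Field F] (σ : F →+* F) (f : Polynomial F) :
    Polynomial F :=
  Polynomial.C (σ (f.coeff 0))⁻¹ * (f.map σ).reverse

section DualPolynomial

variable {F : Type} [Field F] (σ : F →+* F) {f : F[X]}

lemma natTrailingDegree_map_eq_zero (hf : f.coeff 0 ≠ 0) : (f.map σ).natTrailingDegree = 0 :=
  natTrailingDegree_eq_zero.mpr (Or.inr (by simpa using hf))

lemma natDegree_dualPolySigma (hf : f.coeff 0 ≠ 0) :
    (dualPolySigma σ f).natDegree = f.natDegree := by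
  rw [dualPolySigma, natDegree_C_mul (by simpa using hf), reverse_natDegree,
    natTrailingDegree_map_eq_zero σ hf, Nat.sub_zero, natDegree_map]

lemma monic_dualPolySigma (hf : f.coeff 0 ≠ 0) : (dualPolySigma σ f).Monic := by
  rw [Monic, dualPolySigma, leadingCoeff_mul, leadingCoeff_C, reverse_leadingCoeff,
    trailingCoeff, natTrailingDegree_map_eq_zero σ hf, coeff_map,
    inv_mul_cancel₀ (by simpa using hf)]

lemma eq_dualPolySigma_of_dvd (hmonic : f.Monic) (hf : f.coeff 0 ≠ 0)
    (hdvd : f ∣ dualPolySigma σ f) : f = dualPolySigma σ f :=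
  (eq_of_monic_of_dvd_of_natDegree_le hmonic (monic_dualPolySigma σ hf) hdvd
    (natDegree_dualPolySigma σ hf).le).symm

end DualPolynomial

section Isometry

variable {R W : Type*} [CommRing R] [AddCommGroup W] [Module R W] {σ : R →+* R}
  {B : W →ₗ[R] W →ₛₗ[σ] R} {Y : Module.End R W}

lemma isometry_pow (hY : ∀ u v, B (Y u) (Y v) = B u v) (k : ℕ) (u v : W) :
    B ((Y ^ k) u) ((Y ^ k) v) = B u v := by
  induction k with
  | zero => rfl
  | succ k ih => rw [pow_succ', Module.End.mul_apply, Module.End.mul_apply, hY, ih]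

lemma apply_aeval_reflect_map (hY : ∀ u v, B (Y u) (Y v) = B u v) {p : R[X]} {n : ℕ}
    (hp : p.natDegree ≤ n) (w v : W) :
    B (aeval Y (reflect n (p.map σ)) w) v = B ((Y ^ n) w) (aeval Y p v) := by
  refine induction_with_natDegree_le
    (fun p => B (aeval Y (reflect n (p.map σ)) w) v = B ((Y ^ n) w) (aeval Y p v)) n
    (by simp) (fun k a _ hk => ?_) (fun p q _ _ hp hq => ?_) p hp
  · have hmon : B ((Y ^ n) w) ((Y ^ k) v) = B ((Y ^ (n - k)) w) v := by
      obtain ⟨m, rfl⟩ := Nat.exists_eq_add_of_le hk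
      rw [pow_add, Module.End.mul_apply, isometry_pow hY, Nat.add_sub_cancel_left]
    simp [revAt_le hk, hmon]
  · simp only [Polynomial.map_add, reflect_add, map_add, LinearMap.add_apply, hp, hq]

lemma injective_of_isometry (hB : B.SeparatingLeft) (hY : ∀ u v, B (Y u) (Y v) = B u v) :
    Function.Injective Y := by
  refine (injective_iff_map_eq_zero Y).mpr fun u hu => hB u fun v => ?_
  rw [← hY, hu, map_zero, LinearMap.zero_apply]

end Isometry

section Field

variable {F : Type} {W : Type*} [Field F] [AddCommGroup W] [Module F W] {σ : F →+* F}
  {B : W →ₗ[F] W →ₛₗ[σ] F} {Y : Module.End F W}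

lemma aeval_reverse_map_eq_zero (hB : B.SeparatingLeft) (hY : ∀ u v, B (Y u) (Y v) = B u v)
    {p : F[X]} (hp : aeval Y p = 0) : aeval Y (p.map σ).reverse = 0 := by
  refine LinearMap.ext fun w => hB _ fun v => ?_
  rw [reverse, natDegree_map, apply_aeval_reflect_map hY le_rfl, hp, LinearMap.zero_apply,
    map_zero]

theorem minpoly_eq_dualPolySigma_of_isometry [FiniteDimensional F W] (hB : B.SeparatingLeft)
    (hY : ∀ u v, B (Y u) (Y v) = B u v) : minpoly F Y = dualPolySigma σ (minpoly F Y) := by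
  refine eq_dualPolySigma_of_dvd σ (minpoly.monic (Algebra.IsIntegral.isIntegral Y))
    (LinearMap.minpoly_coeff_zero_of_injective (injective_of_isometry hB hY))
    (minpoly.dvd F Y ?_)
  rw [dualPolySigma, map_mul, aeval_reverse_map_eq_zero hB hY (minpoly.aeval F Y), mul_zero]

end Field

theorem minpoly_restrict_self_dual_general
    (F : Type) [Field F] (σ : F →+* F)
    (ε : F)
    (V : Type) [AddCommGroup V] [Module F V] [FiniteDimensional F V]
    (β : V → V → F)
    (hadd : ∀ u u' v : V, β (u + u') v = β u v + β u' v)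
    (hsmul : ∀ (c : F) (u v : V), β (c • u) v = c * β u v)
    (hconj : ∀ u v : V, β v u = ε * σ (β u v))
    (X : V →ₗ[F] V)
    (hXβ : ∀ u v : V, β (X u) (X v) = β u v)
    (U : Submodule F V) (hXU : ∀ u ∈ U, X u ∈ U)
    (hUnd : ∀ w ∈ U, (∀ u ∈ U, β u w = 0) → w = 0) :
    minpoly F (X.restrict hXU) = dualPolySigma σ (minpoly F (X.restrict hXU)) := by
  have hadd₂ : ∀ u v v' : V, β u (v + v') = β u v + β u v' := fun u v v' => by
    rw [hconj, hadd, map_add, mul_add, ← hconj, ← hconj]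
  have hsmul₂ : ∀ (c : F) (u v : V), β u (c • v) = σ c * β u v := fun c u v => by
    rw [hconj, hsmul, map_mul, hconj v u, mul_left_comm]
  let B : V →ₗ[F] V →ₛₗ[σ] F := LinearMap.mk₂'ₛₗ (RingHom.id F) σ β hadd hsmul hadd₂ hsmul₂
  have hrefl : B.IsRefl := fun u v h => by
    simp only [B, LinearMap.mk₂'ₛₗ_apply] at h ⊢
    rw [hconj, h, map_zero, mul_zero]
  have hsep : (B.domRestrict₁₂ U U).SeparatingLeft := fun w hw =>
    Subtype.ext (hUnd w w.2 fun u hu => hrefl.domRestrict U w ⟨u, hu⟩ (hw ⟨u, hu⟩))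
  exact minpoly_eq_dualPolySigma_of_isometry hsep fun u v => hXβ u v

/-- If `X` is an isometry of a nondegenerate `(ε, σ)`-reflexive
sesquilinear form `β` and `U` is an `X`-invariant subspace with `U ∩ U^⊥ = 0`, then the
minimal polynomial `f` of the restriction of `X` to `U` satisfies `f = f*`. -/
theorem minpoly_restrict_self_dual
    (F : Type) [Field F] [Fintype F] (σ : F →+* F) (hσ : ∀ a : F, σ (σ a) = a)
    (ε : F) (hε : ε = 1 ∨ ε = -1)
    (V : Type) [AddCommGroup V] [Module F V] [FiniteDimensional F V]
    (β : V → V → F)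
    (hadd : ∀ u u' v : V, β (u + u') v = β u v + β u' v)
    (hsmul : ∀ (c : F) (u v : V), β (c • u) v = c * β u v)
    (hconj : ∀ u v : V, β v u = ε * σ (β u v))
    (hnd : ∀ u : V, (∀ v : V, β u v = 0) → u = 0)
    (X : V →ₗ[F] V) (hX : Function.Bijective X)
    (hXβ : ∀ u v : V, β (X u) (X v) = β u v)
    (U : Submodule F V) (hXU : ∀ u ∈ U, X u ∈ U)
    (hUnd : ∀ w ∈ U, (∀ u ∈ U, β u w = 0) → w = 0) :
    minpoly F (X.restrict hXU) = dualPolySigma σ (minpoly F (X.restrict hXU)) :=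
  minpoly_restrict_self_dual_general F σ ε V β hadd hsmul hconj X hXβ U hXU hUnd
end

section
/- Let q be a prime power and f ∈ F_q[t] a monic irreducible polynomial with deg f > 1 and f = f*, where f*(t) = f(0)⁻¹ · t^{deg f} · f(1/t) is the dual polynomial. Then deg f is even. -/
/-!
Evaluating at `1` does not see the reversal, so `f* = f` together with `f(1) ≠ 0` (an irreducible
polynomial of degree `> 1` has no roots) forces `f(0) = 1`, i.e. `f` is palindromic. A palindromic
polynomial of odd degree `d` vanishes at `-1`, because the terms of degrees `i` and `d - i` cancel,
contradicting irreducibility.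
-/

/-- The dual polynomial `f*(t) = f(0)⁻¹ · t^(deg f) · f(1/t)`. -/
noncomputable def dualPoly {F : Type} [Field F] (f : Polynomial F) : Polynomial F :=
  Polynomial.C (f.coeff 0)⁻¹ * f.reverse

theorem neg_one_pow_add_neg_one_pow_of_odd_add {R : Type*} [Ring R] {m n : ℕ}
    (h : Odd (m + n)) : (-1 : R) ^ m + (-1) ^ n = 0 := by
  rcases Nat.even_or_odd m with hm | hm
  · have hn : Odd n := (Nat.odd_add'.mp h).mpr hm
    simp [hm.neg_one_pow, hn.neg_one_pow]
  · have hn : Even n := (Nat.odd_add.mp h).mp hm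
    simp [hm.neg_one_pow, hn.neg_one_pow]

namespace Polynomial

theorem eval_one_reverse {R : Type*} [CommSemiring R] (f : R[X]) :
    f.reverse.eval 1 = f.eval 1 := by
  let _ : Invertible (1 : R) := invertibleOne
  simpa [eval₂_eq_eval_map] using eval₂_reverse_mul_pow (RingHom.id R) 1 f

theorem reverse_eq_self_of_dualPoly_eq_self {F : Type} [Field F] {f : F[X]}
    (h1 : f.eval 1 ≠ 0) (hself : dualPoly f = f) : f.reverse = f := by
  have hinv : (f.coeff 0)⁻¹ = 1 := by
    have := congrArg (eval 1) hself
    rw [dualPoly, eval_mul, eval_C, eval_one_reverse] at this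
    exact mul_right_cancel₀ h1 (this.trans (one_mul _).symm)
  rw [dualPoly, hinv, C_1, one_mul] at hself
  exact hself

theorem coeff_sub_eq_coeff_of_reverse_eq_self {R : Type*} [Semiring R] {f : R[X]}
    (hf : f.reverse = f) {i : ℕ} (hi : i ≤ f.natDegree) :
    f.coeff (f.natDegree - i) = f.coeff i := by
  conv_rhs => rw [← hf, coeff_reverse, revAt_le hi]

theorem eval_neg_one_eq_zero_of_reverse_eq_self {R : Type*} [CommRing R] {f : R[X]}
    (hf : f.reverse = f) (hodd : Odd f.natDegree) : f.eval (-1) = 0 := by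
  set d := f.natDegree
  -- Pair the terms `i ↔ d - i`: the shortcut `f(-1) = (-1)^d f(-1)` fails in characteristic 2.
  rw [eval_eq_sum_range]
  refine Finset.sum_involution (fun i _ => d - i) (fun i hi => ?_) (fun i hi _ => ?_)
    (fun i hi => ?_) (fun i hi => ?_)
  · have hid : i ≤ d := Nat.lt_succ_iff.mp (Finset.mem_range.mp hi)
    rw [coeff_sub_eq_coeff_of_reverse_eq_self hf hid, ← mul_add,
      neg_one_pow_add_neg_one_pow_of_odd_add (by rwa [Nat.add_sub_cancel' hid]), mul_zero]
  · obtain ⟨k, hk⟩ := hodd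
    omega
  · simp only [Finset.mem_range] at hi ⊢
    omega
  · simp only [Finset.mem_range] at hi
    omega

end Polynomial

theorem selfDual_irreducible_even_degree_general
    (F : Type) [Field F]
    (f : Polynomial F) (hirr : Irreducible f)
    (hdeg : 1 < f.natDegree) (hself : dualPoly f = f) :
    Even f.natDegree := by
  have hnoroot (a : F) : ¬ f.IsRoot a := hirr.not_isRoot_of_natDegree_ne_one hdeg.ne'
  have hpal : f.reverse = f := Polynomial.reverse_eq_self_of_dualPoly_eq_self (hnoroot 1) hself
  by_contra hodd
  exact hnoroot (-1)
    (Polynomial.eval_neg_one_eq_zero_of_reverse_eq_self hpal (Nat.not_even_iff_odd.mp hodd))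

/-- A self-dual monic irreducible polynomial of degree `> 1` over a finite
field has even degree. -/
theorem selfDual_irreducible_even_degree
    (q : ℕ) (hq : IsPrimePow q)
    (F : Type) [Field F] [Fintype F] (hF : Fintype.card F = q)
    (f : Polynomial F) (hmon : f.Monic) (hirr : Irreducible f)
    (hdeg : 1 < f.natDegree) (hself : dualPoly f = f) :
    Even f.natDegree :=
  selfDual_irreducible_even_degree_general F f hirr hdeg hself
end

section
/- Let q be an odd prime power, k ≥ 1, ε ∈ {1, −1} ⊆ F_q, and let V be an F_q-vector space of dimension 2k. Suppose X ∈ GL(V) acts cyclically on V (there exists v ∈ V such that the vectors v, vX, vX², … span V) with minimal polynomial (t − ε)^{2k}. Then there is no nondegenerate symmetric bilinear form β on V satisfying β(uX, vX) = β(u, v) for all u, v ∈ V. -/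
/-!
Put `N = X - ε`. Invariance and `ε² = 1` give `β (N u) (X z) = -ε β u (N z)`, hence
`β (Nⁿ u) (Xⁿ z) = (-ε)ⁿ β u (Nⁿ z)`. For `n = 2k - 1` the vector `w = Nⁿ v` satisfies
`X w = ε w` because `N^{2k} = 0`, so invariance also gives `β w (Xᵐ z) = εᵐ β w z`. Taking `z = v`
and using symmetry, `β w v = (-1)ⁿ β w v = -β w v`, so `β w v = 0` as `q` is odd, and then
`β w (Xᵐ v) = 0` for all `m`. Thus `w` is orthogonal to the cyclic span `V` and vanishes, so `Nⁿ`
kills the cyclic vector `v`, hence all of `V`: the minimal polynomial would divide `(t - ε)^{2k-1}`.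
-/

open Polynomial

namespace Module.End

variable {R M : Type*}

theorem eq_zero_of_commute_of_apply_cyclic_eq_zero [CommSemiring R] [AddCommMonoid M]
    [Module R M] {f g : Module.End R M} (hfg : Commute f g) {v : M}
    (hv : Submodule.span R (Set.range fun m : ℕ => (f ^ m) v) = ⊤) (hg : g v = 0) : g = 0 :=
  LinearMap.ext_on_range hv fun m => by
    rw [LinearMap.zero_apply, ← mul_apply, ← (hfg.pow_left m).eq, mul_apply, hg, map_zero]

variable [CommRing R] [AddCommGroup M] [Module R M]

theorem commute_sub_algebraMap (X : Module.End R M) (ε : R) :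
    Commute X (X - algebraMap R _ ε) :=
  (Commute.refl X).sub_right (Algebra.commute_algebraMap_right ε X)

theorem apply_pow_sub_algebraMap_eq_smul {X : Module.End R M} {ε : R} {n : ℕ}
    (hN : (X - algebraMap R _ ε) ^ (n + 1) = 0) (v : M) :
    X (((X - algebraMap R _ ε) ^ n) v) = ε • ((X - algebraMap R _ ε) ^ n) v := by
  have h : ((X - algebraMap R _ ε) * (X - algebraMap R _ ε) ^ n) v = 0 := by
    rw [← pow_succ', hN, LinearMap.zero_apply]
  rwa [mul_apply, LinearMap.sub_apply, algebraMap_end_apply, sub_eq_zero] at h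

end Module.End

namespace LinearMap.BilinForm

variable {R M : Type*} [CommRing R] [AddCommGroup M] [Module R M] {B : LinearMap.BilinForm R M}
  {X : Module.End R M} {ε : R}

theorem pow_apply_pow_apply_of_invariant (hB : ∀ u z, B (X u) (X z) = B u z) (n : ℕ) (u z : M) :
    B ((X ^ n) u) ((X ^ n) z) = B u z := by
  induction n with
  | zero => simp
  | succ n ih => rw [pow_succ', Module.End.mul_apply, Module.End.mul_apply, hB, ih]

theorem apply_pow_apply_of_apply_eq_smul (hB : ∀ u z, B (X u) (X z) = B u z) (hε : ε * ε = 1)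
    {w : M} (hw : X w = ε • w) (n : ℕ) (z : M) : B w ((X ^ n) z) = ε ^ n * B w z := by
  have hXw : (X ^ n) w = ε ^ n • w := by
    induction n with
    | zero => simp
    | succ n ih => rw [pow_succ', Module.End.mul_apply, ih, map_smul, hw, smul_smul, pow_succ]
  have h := pow_apply_pow_apply_of_invariant hB n w z
  rw [hXw, map_smul, LinearMap.smul_apply, smul_eq_mul] at h
  have hεn : ε ^ n * ε ^ n = 1 := by rw [← mul_pow, hε, one_pow]
  linear_combination ε ^ n * h - B w ((X ^ n) z) * hεn

/-- `-ε X⁻¹ N` is the adjoint of `N = X - ε`, written without inverting `X`. -/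
theorem sub_algebraMap_apply_apply (hB : ∀ u z, B (X u) (X z) = B u z) (hε : ε * ε = 1)
    (u z : M) :
    B ((X - algebraMap R _ ε) u) (X z) = -ε * B u ((X - algebraMap R _ ε) z) := by
  simp only [LinearMap.sub_apply, Module.algebraMap_end_apply, map_sub, map_smul,
    LinearMap.smul_apply, smul_eq_mul, hB]
  linear_combination -(B u z) * hε

theorem pow_sub_algebraMap_apply_pow_apply (hB : ∀ u z, B (X u) (X z) = B u z)
    (hε : ε * ε = 1) (n : ℕ) (u z : M) :
    B (((X - algebraMap R _ ε) ^ n) u) ((X ^ n) z) =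
      (-ε) ^ n * B u (((X - algebraMap R _ ε) ^ n) z) := by
  induction n generalizing z with
  | zero => simp
  | succ n ih =>
    rw [pow_succ' _ n, pow_succ' X n, Module.End.mul_apply, Module.End.mul_apply,
      sub_algebraMap_apply_apply hB hε, ← Module.End.mul_apply,
      ← ((Module.End.commute_sub_algebraMap X ε).pow_left n).eq, Module.End.mul_apply, ih,
      ← Module.End.mul_apply _ _ z, ← pow_succ, pow_succ']
    ring

theorem pow_sub_algebraMap_apply_self_eq_zero [NoZeroDivisors R]
    (hB : ∀ u z, B (X u) (X z) = B u z) (hε : ε * ε = 1) (hsymm : B.IsSymm) (h2 : (2 : R) ≠ 0)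
    {n : ℕ} (hn : Odd n) (hN : (X - algebraMap R _ ε) ^ (n + 1) = 0) (v : M) :
    B (((X - algebraMap R _ ε) ^ n) v) v = 0 := by
  set w := ((X - algebraMap R _ ε) ^ n) v
  have hskew := pow_sub_algebraMap_apply_pow_apply hB hε n v v
  rw [apply_pow_apply_of_apply_eq_smul hB hε (Module.End.apply_pow_sub_algebraMap_eq_smul hN v),
    hsymm.eq v, hn.neg_pow] at hskew
  have hεn : ε ^ n * ε ^ n = 1 := by rw [← mul_pow, hε, one_pow]
  have h : 2 * B w v = 0 := by linear_combination ε ^ n * hskew - 2 * B w v * hεn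
  exact (mul_eq_zero.mp h).resolve_left h2

theorem pow_sub_algebraMap_eq_zero_of_cyclic [NoZeroDivisors R]
    (hB : ∀ u z, B (X u) (X z) = B u z) (hε : ε * ε = 1) (hsymm : B.IsSymm)
    (hnd : B.SeparatingLeft) (h2 : (2 : R) ≠ 0) {n : ℕ} (hn : Odd n)
    (hN : (X - algebraMap R _ ε) ^ (n + 1) = 0) {v : M}
    (hv : Submodule.span R (Set.range fun m : ℕ => (X ^ m) v) = ⊤) :
    (X - algebraMap R _ ε) ^ n = 0 := by
  have hw := Module.End.apply_pow_sub_algebraMap_eq_smul hN v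
  have horth : B (((X - algebraMap R _ ε) ^ n) v) = 0 := LinearMap.ext_on_range hv fun m => by
    rw [apply_pow_apply_of_apply_eq_smul hB hε hw,
      pow_sub_algebraMap_apply_self_eq_zero hB hε hsymm h2 hn hN, mul_zero, LinearMap.zero_apply]
  exact Module.End.eq_zero_of_commute_of_apply_cyclic_eq_zero
    ((Module.End.commute_sub_algebraMap X ε).pow_right n) hv (hnd _ (LinearMap.congr_fun horth))

end LinearMap.BilinForm

theorem no_invariant_symmetric_form_of_cyclic_general
    (q k : ℕ) (hodd : Odd q) (hk : 1 ≤ k)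
    (F : Type) [Field F] [Fintype F] (hF : Fintype.card F = q)
    (ε : F) (hε : ε = 1 ∨ ε = -1)
    (V : Type) [AddCommGroup V] [Module F V]
    (X : V →ₗ[F] V)
    (hcyc : ∃ v : V, Submodule.span F (Set.range fun m : ℕ => (X ^ m) v) = ⊤)
    (hmin : minpoly F X = (Polynomial.X - Polynomial.C ε) ^ (2 * k)) :
    ¬ ∃ β : V → V → F,
        (∀ u u' v : V, β (u + u') v = β u v + β u' v) ∧
        (∀ (c : F) (u v : V), β (c • u) v = c * β u v) ∧
        (∀ u v : V, β u v = β v u) ∧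
        (∀ u : V, (∀ v : V, β u v = 0) → u = 0) ∧
        (∀ u v : V, β (X u) (X v) = β u v) := by
  rintro ⟨β, hadd, hsmul, hsymm, hnd, hinv⟩
  obtain ⟨v, hv⟩ := hcyc
  let B : LinearMap.BilinForm F V := LinearMap.mk₂ F β hadd hsmul
    (fun u z z' => by rw [hsymm, hadd, hsymm z, hsymm z'])
    (fun c u z => by rw [hsymm, hsmul, hsymm z, smul_eq_mul])
  have hε2 : ε * ε = 1 := by rcases hε with rfl | rfl <;> norm_num
  have h2 : (2 : F) ≠ 0 := Ring.two_ne_zero fun hchar => by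
    have := FiniteField.even_card_of_char_two hchar
    rw [hF, ← Nat.even_iff] at this
    exact Nat.not_even_iff_odd.mpr hodd this
  have hN : (X - algebraMap F _ ε) ^ (2 * k - 1 + 1) = 0 := by
    simpa [Nat.sub_add_cancel (by omega : 1 ≤ 2 * k), hmin] using minpoly.aeval F X
  have hN' := LinearMap.BilinForm.pow_sub_algebraMap_eq_zero_of_cyclic (B := B) hinv hε2 ⟨hsymm⟩
    hnd h2 ⟨k - 1, by omega⟩ hN hv
  have hdvd := minpoly.dvd F X (p := (Polynomial.X - C ε) ^ (2 * k - 1)) (by simpa using hN')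
  rw [hmin, pow_dvd_pow_iff (X_sub_C_ne_zero ε) (not_isUnit_X_sub_C ε)] at hdvd
  omega

/-- For `q` odd, if `X` acts cyclically on a `2k`-dimensional space with
minimal polynomial `(t − ε)^{2k}` (`ε = ±1`), then `X` preserves no nondegenerate symmetric
bilinear form. -/
theorem no_invariant_symmetric_form_of_cyclic
    (q k : ℕ) (hq : IsPrimePow q) (hodd : Odd q) (hk : 1 ≤ k)
    (F : Type) [Field F] [Fintype F] (hF : Fintype.card F = q)
    (ε : F) (hε : ε = 1 ∨ ε = -1)
    (V : Type) [AddCommGroup V] [Module F V] [FiniteDimensional F V]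
    (hdim : Module.finrank F V = 2 * k)
    (X : V →ₗ[F] V) (hX : Function.Bijective X)
    (hcyc : ∃ v : V, Submodule.span F (Set.range fun m : ℕ => (X ^ m) v) = ⊤)
    (hmin : minpoly F X = (Polynomial.X - Polynomial.C ε) ^ (2 * k)) :
    ¬ ∃ β : V → V → F,
        (∀ u u' v : V, β (u + u') v = β u v + β u' v) ∧
        (∀ (c : F) (u v : V), β (c • u) v = c * β u v) ∧
        (∀ u v : V, β u v = β v u) ∧
        (∀ u : V, (∀ v : V, β u v = 0) → u = 0) ∧
        (∀ u v : V, β (X u) (X v) = β u v) :=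
  no_invariant_symmetric_form_of_cyclic_general q k hodd hk F hF ε hε V X hcyc hmin
end
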